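/- For any permutation ω ∈ S_n and any acyclic reduced pipe dream P ∈ Π(ω), the set L(P) of linear extensions of P is a nonempty interval of the weak order on S_n: there exist permutations σ ≤ τ such that L(P) = {π ∈ S_n : σ ≤ π ≤ τ}. -/
import Mathlib


/-- A pipe dream of size `n` on the triangular shape, with boxes indexed by pairs
`(r, c)` of a row `r` and a column `c`, both `0`-indexed (rows increase southwards,
columns increase eastwards).  `cross r c = true` means that box `(r, c)` contains a
crossing tile; all other boxes contain elbow tiles.  Crossings are only allowed in
the full boxes of the triangular shape, i.e. those with `r + c + 2 ≤ n` (the boxes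
with `r + c + 1 = n` are the half-boxes on the antidiagonal, which are forced
elbows).  The `n` pipes enter horizontally on the left side in rows `0, …, n-1` and
exit vertically on the top side in columns `0, …, n-1`; pipe `k` is the pipe
entering at row `k`.  An elbow tile connects the west edge of its box to the north
edge (the pipe travelling through this elbow passes northwest of the tile) and the
south edge to the east edge (this pipe passes southeast of the tile); a crossing
tile connects west to east and south to north. -/
structure PipeDream (n : ℕ) where
  cross : ℕ → ℕ → Bool
  inShape : ∀ r c : ℕ, cross r c = true → r + c + 2 ≤ n

namespace PipeDream

variable {n : ℕ}

/-- `(P.pipes r c).1` is the label of the pipe entering box `(r, c)` from the west,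
and `(P.pipes r c).2` is the label of the pipe entering box `(r, c)` from the south
(junk value `0` if there is no box below box `(r, c)` in the triangular shape). -/
def pipes (P : PipeDream n) : ℕ → ℕ → ℕ × ℕ
  | r, c =>
    (if hc : c = 0 then r
      else if P.cross r (c - 1) then (pipes P r (c - 1)).1 else (pipes P r (c - 1)).2,
     if hr : r + c + 2 ≤ n then
        if P.cross (r + 1) c then (pipes P (r + 1) c).2 else (pipes P (r + 1) c).1
      else 0)
  termination_by r c => (n - r) + c
  decreasing_by all_goals omega

/-- The pipe entering box `(r, c)` from the west (travelling eastwards). -/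
def west (P : PipeDream n) (r c : ℕ) : ℕ := (pipes P r c).1

/-- The pipe entering box `(r, c)` from the south (travelling northwards). -/
def south (P : PipeDream n) (r c : ℕ) : ℕ := (pipes P r c).2

/-- The pipe exiting on the top side at column `c`. -/
def exitPipe (P : PipeDream n) (c : ℕ) : ℕ :=
  if P.cross 0 c then P.south 0 c else P.west 0 c

/-- `P` has exit permutation `ω`, i.e. the pipe exiting at column `c` is `ω c`;
equivalently, pipe `k` exits at column `ω⁻¹ k`. -/
def HasExitPerm (P : PipeDream n) (ω : Equiv.Perm (Fin n)) : Prop :=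
  ∀ c : Fin n, P.exitPipe c.val = (ω c).val

/-- `P` is reduced: any two of its pipes cross at most once. -/
def Reduced (P : PipeDream n) : Prop :=
  ∀ r c r' c' : ℕ, P.cross r c = true → P.cross r' c' = true → (r, c) ≠ (r', c') →
    ¬ ((P.west r c = P.west r' c' ∧ P.south r c = P.south r' c') ∨
        (P.west r c = P.south r' c' ∧ P.south r c = P.west r' c'))

/-- The arcs of the contact graph `P♯` of `P`: there is one arc for each elbow
contact of `P` (an elbow tile in a full box of the triangular shape), oriented from
the pipe passing northwest of the contact (the one travelling west-to-north) to the
pipe passing southeast of it (the one travelling south-to-east). -/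
def Arc (P : PipeDream n) (i j : ℕ) : Prop :=
  ∃ r c : ℕ, r + c + 2 ≤ n ∧ P.cross r c = false ∧ P.west r c = i ∧ P.south r c = j

/-- `P` is acyclic: its contact graph has no directed cycle. -/
def Acyclic (P : PipeDream n) : Prop := ∀ i : ℕ, ¬ Relation.TransGen P.Arc i i

/-- `i ⪯_P j` : there is a directed path (possibly empty) from `i` to `j` in the
contact graph of `P`. -/
def Path (P : PipeDream n) (i j : ℕ) : Prop := Relation.ReflTransGen P.Arc i j

/-- `π` is a linear extension of `P` : `π⁻¹ i < π⁻¹ j` for every arc `i → j` of the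
contact graph of `P`. -/
def LinExt (P : PipeDream n) (π : Equiv.Perm (Fin n)) : Prop :=
  ∀ i j : Fin n, P.Arc i.val j.val → π⁻¹ i < π⁻¹ j

/-- There is a contact (an elbow tile in a full box) between pipes `i` and `j`
at box `b`. -/
def ContactAt (P : PipeDream n) (i j : ℕ) (b : ℕ × ℕ) : Prop :=
  b.1 + b.2 + 2 ≤ n ∧ P.cross b.1 b.2 = false ∧
    ((P.west b.1 b.2 = i ∧ P.south b.1 b.2 = j) ∨
      (P.west b.1 b.2 = j ∧ P.south b.1 b.2 = i))

/-- `P'` is obtained from `P` by the flip exchanging the contact at box `b` with the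
crossing at box `b'` (a contact and a crossing between the same two pipes). -/
def IsFlip (P P' : PipeDream n) (b b' : ℕ × ℕ) : Prop :=
  b ≠ b' ∧
  P.cross b.1 b.2 = false ∧ P.cross b'.1 b'.2 = true ∧
  P'.cross b.1 b.2 = true ∧ P'.cross b'.1 b'.2 = false ∧
  (∀ r c : ℕ, (r, c) ≠ b → (r, c) ≠ b' → P.cross r c = P'.cross r c) ∧
  ((P.west b.1 b.2 = P.west b'.1 b'.2 ∧ P.south b.1 b.2 = P.south b'.1 b'.2) ∨
    (P.west b.1 b.2 = P.south b'.1 b'.2 ∧ P.south b.1 b.2 = P.west b'.1 b'.2))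

/-- There is an increasing flip from `P` to `P'`: a flip exchanging a contact at a
box `b` weakly southwest of the box `b'` of the corresponding crossing. -/
def IncFlip (P P' : PipeDream n) : Prop :=
  ∃ b b' : ℕ × ℕ, P.IsFlip P' b b' ∧ b'.1 ≤ b.1 ∧ b.2 ≤ b'.2

end PipeDream

/-- The weak order on permutations of `Fin n` : `π ≤ σ` if and only if
`Inv(π) ⊆ Inv(σ)`, where `Inv(π)` is the set of pairs `(i, j)` with `i < j` and
`π⁻¹ i > π⁻¹ j`. -/
def WeakLE {n : ℕ} (π σ : Equiv.Perm (Fin n)) : Prop :=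
  ∀ i j : Fin n, i < j → π⁻¹ j < π⁻¹ i → σ⁻¹ j < σ⁻¹ i

namespace PipeDream
variable {n : ℕ}

lemma pipes_def (P : PipeDream n) (r c : ℕ) : P.pipes r c =
    (if c = 0 then r
      else if P.cross r (c - 1) then (pipes P r (c - 1)).1 else (pipes P r (c - 1)).2,
     if r + c + 2 ≤ n then
        if P.cross (r + 1) c then (pipes P (r + 1) c).2 else (pipes P (r + 1) c).1
      else 0) := by
  rw [pipes]; simp only [dite_eq_ite]

lemma west_zero (P : PipeDream n) (r : ℕ) : P.west r 0 = r := by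
  unfold west; rw [pipes_def]; simp

lemma west_succ (P : PipeDream n) (r c : ℕ) :
    P.west r (c+1) = if P.cross r c then P.west r c else P.south r c := by
  unfold west south; rw [pipes_def]; simp

lemma south_def (P : PipeDream n) (r c : ℕ) :
    P.south r c = if r + c + 2 ≤ n then
      (if P.cross (r+1) c then P.south (r+1) c else P.west (r+1) c) else 0 := by
  conv_lhs => unfold south; rw [pipes_def]
  unfold west south
  simp

lemma cross_false (P : PipeDream n) {r c : ℕ} (h : ¬ r + c + 2 ≤ n) : P.cross r c = false := by
  by_contra hc
  exact h (P.inShape r c (by simpa using hc))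

end PipeDream

namespace PipeDream
variable {n : ℕ}

private lemma boundsAux (P : PipeDream n) :
    ∀ k r c, (n - r) + c ≤ k →
      (r + c + 1 ≤ n → P.west r c < n) ∧ (r + c + 2 ≤ n → P.south r c < n) := by
  intro k
  induction k with
  | zero =>
    intro r c hk
    constructor
    · intro h
      have hc : c = 0 := by omega
      subst hc; rw [west_zero]; omega
    · intro h; omega
  | succ k ih =>
    intro r c hk
    constructor
    · intro h
      match c with
      | 0 => rw [west_zero]; omega
      | c + 1 =>
        rw [west_succ]
        by_cases hc : P.cross r c
        · simp [hc]
          exact ((ih r c (by omega)).1 (by omega))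
        · simp [hc]
          exact ((ih r c (by omega)).2 (by omega))
    · intro h
      rw [south_def]
      simp only [h, if_true]
      by_cases hc : P.cross (r+1) c
      · have hs := P.inShape (r+1) c (by simpa using hc)
        simp [hc]
        exact (ih (r+1) c (by omega)).2 (by omega)
      · simp [hc]
        exact (ih (r+1) c (by omega)).1 (by omega)

lemma west_lt (P : PipeDream n) {r c : ℕ} (h : r + c + 1 ≤ n) : P.west r c < n :=
  (P.boundsAux ((n - r) + c) r c le_rfl).1 h

lemma south_lt (P : PipeDream n) {r c : ℕ} (h : r + c + 2 ≤ n) : P.south r c < n :=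
  (P.boundsAux ((n - r) + c) r c le_rfl).2 h

lemma mrec (P : PipeDream n) {r : ℕ} (h : r + 2 ≤ n) :
    P.south r 0 = if P.cross (r+1) 0 then P.south (r+1) 0 else (r+1) := by
  rw [south_def]
  simp only [show r + 0 + 2 ≤ n from by omega, if_true, west_zero]

private lemma mAux (P : PipeDream n) : ∀ k r, n - r ≤ k → r + 2 ≤ n →
    (r < P.south r 0) ∧
    (P.south r 0 + 1 = n ∨ (P.south r 0 + 2 ≤ n ∧ P.cross (P.south r 0) 0 = false)) ∧
    (∀ u, r < u → u < P.south r 0 → P.cross u 0 = true ∧ P.south u 0 = P.south r 0) := by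
  intro k
  induction k with
  | zero => intro r hk h; omega
  | succ k ih =>
    intro r hk h
    rw [P.mrec h]
    cases hc : P.cross (r+1) 0 with
    | true =>
      have hs := P.inShape (r+1) 0 (by simpa using hc)
      have IH := ih (r+1) (by omega) (by omega)
      simp only [if_true]
      refine ⟨by omega, IH.2.1, ?_⟩
      intro u hu1 hu2
      rcases Nat.lt_or_ge (r+1) u with h1 | h1
      · exact IH.2.2 u (by omega) hu2
      · have : u = r + 1 := by omega
        subst this
        exact ⟨hc, rfl⟩
    | false =>
      simp only [Bool.false_eq_true, if_false]
      refine ⟨by omega, ?_, by omega⟩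
      by_cases h2 : r + 3 ≤ n
      · exact Or.inr ⟨by omega, hc⟩
      · left; omega

lemma m_gt (P : PipeDream n) {r : ℕ} (h : r + 2 ≤ n) : r < P.south r 0 :=
  (P.mAux (n-r) r le_rfl h).1

lemma m_alt (P : PipeDream n) {r : ℕ} (h : r + 2 ≤ n) :
    P.south r 0 + 1 = n ∨ (P.south r 0 + 2 ≤ n ∧ P.cross (P.south r 0) 0 = false) :=
  (P.mAux (n-r) r le_rfl h).2.1

lemma m_interior (P : PipeDream n) {r u : ℕ} (h : r + 2 ≤ n) (h1 : r < u)
    (h2 : u < P.south r 0) : P.cross u 0 = true ∧ P.south u 0 = P.south r 0 :=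
  (P.mAux (n-r) r le_rfl h).2.2 u h1 h2

private lemma mAllAux (P : PipeDream n) : ∀ k t u, u - t ≤ k → t < u → u + 1 ≤ n →
    (∀ v, t < v → v < u → P.cross v 0 = true) → (u + 1 = n ∨ P.cross u 0 = false) →
    P.south t 0 = u := by
  intro k
  induction k with
  | zero => intro t u hk; omega
  | succ k ih =>
    intro t u hk htu hun hmid hu
    have ht2 : t + 2 ≤ n := by omega
    rw [P.mrec ht2]
    rcases Nat.lt_or_ge (t+1) u with h1 | h1
    · have hc : P.cross (t+1) 0 = true := hmid (t+1) (by omega) h1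
      rw [if_pos hc]
      exact ih (t+1) u (by omega) (by omega) hun (fun v hv1 hv2 => hmid v (by omega) hv2) hu
    · have : u = t + 1 := by omega
      subst this
      have hc : P.cross (t+1) 0 = false := by
        rcases hu with hu | hu
        · exact P.cross_false (by omega)
        · exact hu
      rw [hc]; simp

lemma mAll (P : PipeDream n) {t u : ℕ} (htu : t < u) (hun : u + 1 ≤ n)
    (hmid : ∀ v, t < v → v < u → P.cross v 0 = true)
    (hu : u + 1 = n ∨ P.cross u 0 = false) : P.south t 0 = u :=
  P.mAllAux (u - t) t u le_rfl htu hun hmid hu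

/-- label of the pipe entering the peeled dream at row `t`. -/
def lam (P : PipeDream n) (t : ℕ) : ℕ := if P.cross t 0 then t else P.south t 0

lemma exitPipe_zero (P : PipeDream n) :
    P.exitPipe 0 = if P.cross 0 0 then P.south 0 0 else 0 := by
  unfold exitPipe
  by_cases h : P.cross 0 0 <;> simp [h, west_zero]

end PipeDream

namespace PipeDream
variable {n : ℕ}

/-- two pipes cross somewhere. -/
def Crossed (P : PipeDream n) (u v : ℕ) : Prop :=
  ∃ r c, P.cross r c = true ∧
    ((P.west r c = u ∧ P.south r c = v) ∨ (P.west r c = v ∧ P.south r c = u))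

lemma Crossed.symm {P : PipeDream n} {u v : ℕ} (h : P.Crossed u v) : P.Crossed v u := by
  obtain ⟨r, c, h1, h2⟩ := h
  exact ⟨r, c, h1, h2.symm⟩

lemma crossed_col (P : PipeDream n) {s : ℕ} (h : P.cross s 0 = true) :
    P.Crossed s (P.south s 0) :=
  ⟨s, 0, h, Or.inl ⟨P.west_zero s, rfl⟩⟩

lemma arc_col (P : PipeDream n) {s : ℕ} (hs : s + 2 ≤ n) (h : P.cross s 0 = false) :
    P.Arc s (P.south s 0) :=
  ⟨s, 0, by omega, h, P.west_zero s, rfl⟩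

lemma not_cross_of_ne_true {b : Bool} (h : ¬ b = true) : b = false := by
  cases b <;> simp_all

lemma lam_pos (P : PipeDream n) {t : ℕ} (h : P.cross t 0 = true) : P.lam t = t := by
  unfold lam; rw [if_pos h]

lemma lam_neg (P : PipeDream n) {t : ℕ} (h : P.cross t 0 = false) : P.lam t = P.south t 0 := by
  unfold lam; rw [if_neg (by simp [h])]

private lemma greatest_below {p : ℕ → Prop} [DecidablePred p] {w b : ℕ} (hw : w ≤ b)
    (hpw : p w) : ∃ t, w ≤ t ∧ t ≤ b ∧ p t ∧ ∀ v, t < v → v ≤ b → ¬ p v :=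
  ⟨Nat.findGreatest p b, Nat.le_findGreatest hw hpw, Nat.findGreatest_le b,
    Nat.findGreatest_spec hw hpw, fun _ h1 h2 => Nat.findGreatest_is_greatest h1 h2⟩

/-- every elbow row is reachable from the exit pipe (or is it). -/
lemma RC (P : PipeDream n) :
    ∀ u, u + 2 ≤ n → P.cross u 0 = false →
      u = P.exitPipe 0 ∨ Relation.TransGen P.Arc (P.exitPipe 0) u := by
  intro u
  induction u using Nat.strong_induction_on with
  | _ u IH =>
  intro hu hcu
  by_cases hex : ∃ t, t < u ∧ P.cross t 0 = false
  · obtain ⟨w, hw1, hw2⟩ := hex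
    obtain ⟨t, hwt, htu, hpt, hmax'⟩ :=
      greatest_below (p := fun v => P.cross v 0 = false) (b := u - 1) (by omega) hw2
    have hmax : ∀ v, t < v → v < u → P.cross v 0 = true := fun v h1 h2 =>
      by simpa using hmax' v h1 (by omega)
    have hm : P.south t 0 = u := P.mAll (by omega) (by omega) hmax (Or.inr hcu)
    have harc : P.Arc t u := hm ▸ P.arc_col (by omega) hpt
    rcases IH t (by omega) (by omega) hpt with h | h
    · exact Or.inr (h ▸ Relation.TransGen.single harc)
    · exact Or.inr (h.tail harc)
  · push_neg at hex
    rcases Nat.eq_zero_or_pos u with h0 | h0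
    · subst h0
      left
      rw [exitPipe_zero, if_neg (by simp [hcu])]
    · have hc0 : P.cross 0 0 = true := by simpa using hex 0 h0
      have : P.south 0 0 = u :=
        P.mAll h0 (by omega)
          (fun v hv1 hv2 => by simpa using hex v hv2) (Or.inr hcu)
      left
      rw [exitPipe_zero, if_pos hc0, this]

lemma RCm (P : PipeDream n) {s : ℕ} (hs : s + 2 ≤ n) :
    P.south s 0 = P.exitPipe 0 ∨ Relation.TransGen P.Arc (P.exitPipe 0) (P.south s 0) := by
  rcases P.m_alt hs with hp | ⟨hp1, hp2⟩
  · -- south s 0 = n - 1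
    by_cases hex : ∃ t, t + 2 ≤ n ∧ P.cross t 0 = false
    · obtain ⟨w, hw1, hw2⟩ := hex
      obtain ⟨t, hwt, htn, hpt, hmax'⟩ :=
        greatest_below (p := fun v => P.cross v 0 = false) (b := n - 2) (by omega) hw2
      have hmax : ∀ v, t < v → v < P.south s 0 → P.cross v 0 = true := fun v h1 h2 =>
        by simpa using hmax' v h1 (by omega)
      have htlt : t < P.south s 0 := by
        rcases Nat.lt_or_ge t (P.south s 0) with h | h
        · exact h
        · have hccc : P.cross t 0 = false := P.cross_false (c := 0) (by omega)
          omega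
      have hm : P.south t 0 = P.south s 0 :=
        P.mAll htlt (by omega) hmax (Or.inl (by omega))
      have harc : P.Arc t (P.south s 0) := hm ▸ P.arc_col (by omega) hpt
      rcases P.RC t (by omega) hpt with h | h
      · exact Or.inr (h ▸ Relation.TransGen.single harc)
      · exact Or.inr (h.tail harc)
    · push_neg at hex
      have hc0 : P.cross 0 0 = true := by simpa using hex 0 (by omega)
      left
      rw [exitPipe_zero, if_pos hc0]
      symm
      exact P.mAll (by omega) (by omega)
        (fun v hv1 hv2 => by simpa using hex v (by omega))
        (Or.inl (by omega))
  · rcases P.RC _ hp1 hp2 with h | h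
    · exact Or.inl h
    · exact Or.inr h

lemma lam_ne_exit (P : PipeDream n) {t : ℕ} (ht : t + 2 ≤ n) : P.lam t ≠ P.exitPipe 0 := by
  rw [exitPipe_zero]
  cases hct : P.cross t 0 with
  | true =>
    rw [P.lam_pos hct]
    cases hc0 : P.cross 0 0 with
    | true =>
      simp only [if_true]
      intro h
      rcases P.m_alt (show 0 + 2 ≤ n by omega) with h1 | ⟨h1, h2⟩
      · omega
      · rw [← h, hct] at h2; exact absurd h2 (by simp)
    | false =>
      simp only [Bool.false_eq_true, if_false]
      intro h
      subst h
      rw [hc0] at hct; exact absurd hct (by simp)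
  | false =>
    rw [P.lam_neg hct]
    have hgt := P.m_gt ht
    cases hc0 : P.cross 0 0 with
    | true =>
      simp only [if_true]
      intro h
      rcases Nat.eq_zero_or_pos t with h0 | h0
      · subst h0; rw [hc0] at hct; exact absurd hct (by simp)
      · have := (P.m_interior (show 0 + 2 ≤ n by omega) h0 (by omega)).1
        rw [this] at hct; exact absurd hct (by simp)
    | false =>
      simp only [Bool.false_eq_true, if_false]
      omega

lemma lam_inj (P : PipeDream n) {t t' : ℕ} (ht : t + 2 ≤ n) (ht' : t' + 2 ≤ n)
    (h : P.lam t = P.lam t') : t = t' := by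
  cases hct : P.cross t 0 with
  | true =>
    rw [P.lam_pos hct] at h
    cases hct' : P.cross t' 0 with
    | true => rw [P.lam_pos hct'] at h; exact h
    | false =>
      rw [P.lam_neg hct'] at h
      rcases P.m_alt ht' with h1 | ⟨h1, h2⟩
      · omega
      · rw [← h, hct] at h2; exact absurd h2 (by simp)
  | false =>
    rw [P.lam_neg hct] at h
    cases hct' : P.cross t' 0 with
    | true =>
      rw [P.lam_pos hct'] at h
      rcases P.m_alt ht with h1 | ⟨h1, h2⟩
      · omega
      · rw [h, hct'] at h2; exact absurd h2 (by simp)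
    | false =>
      rw [P.lam_neg hct'] at h
      by_contra hne
      rcases Nat.lt_or_ge t t' with hlt | hge
      · have := (P.m_interior ht hlt (h ▸ P.m_gt ht')).1
        rw [this] at hct'; exact absurd hct' (by simp)
      · have hlt : t' < t := by omega
        have := (P.m_interior ht' hlt (h.symm ▸ P.m_gt ht)).1
        rw [this] at hct; exact absurd hct (by simp)

lemma lam_flip (P : PipeDream n) {t t' : ℕ} (h1 : t' < t) (ht : t + 2 ≤ n) (ht' : t' + 2 ≤ n)
    (h2 : P.lam t < P.lam t') :
    P.cross (P.lam t) 0 = true ∧ P.south (P.lam t) 0 = P.lam t' := by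
  cases hct : P.cross t 0 with
  | true =>
    rw [P.lam_pos hct] at h2 ⊢
    cases hct' : P.cross t' 0 with
    | true => rw [P.lam_pos hct'] at h2; omega
    | false =>
      rw [P.lam_neg hct'] at h2 ⊢
      exact ⟨hct, (P.m_interior ht' h1 h2).2⟩
  | false =>
    have hgt := P.m_gt ht
    rw [P.lam_neg hct] at h2
    exfalso
    cases hct' : P.cross t' 0 with
    | true => rw [P.lam_pos hct'] at h2; omega
    | false =>
      rw [P.lam_neg hct'] at h2
      rcases Nat.lt_or_ge t (P.south t' 0) with h | h
      · have := (P.m_interior ht' h1 h).1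
        rw [this] at hct; exact absurd hct (by simp)
      · omega

lemma lam_surj (P : PipeDream n) {y : ℕ} (hy : y < n) (hne : y ≠ P.exitPipe 0) :
    ∃ t, t + 2 ≤ n ∧ P.lam t = y := by
  by_cases hc : y + 2 ≤ n ∧ P.cross y 0 = true
  · exact ⟨y, hc.1, P.lam_pos hc.2⟩
  · have hyalt : y + 1 = n ∨ P.cross y 0 = false := by
      by_cases h2 : y + 2 ≤ n
      · right
        rcases h3 : P.cross y 0 with _ | _
        · rfl
        · exact absurd ⟨h2, h3⟩ hc
      · left; omega
    have hyalt' : y + 1 = n ∨ P.cross y 0 = false → y + 1 = n ∨ P.cross y 0 = false := id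
    by_cases hex : ∃ t, t < y ∧ P.cross t 0 = false
    · obtain ⟨w, hw1, hw2⟩ := hex
      obtain ⟨t, hwt, hty, hpt, hmax'⟩ :=
        greatest_below (p := fun v => P.cross v 0 = false) (b := y - 1) (by omega) hw2
      have hmax : ∀ v, t < v → v < y → P.cross v 0 = true := fun v h1 h2 =>
        by simpa using hmax' v h1 (by omega)
      have hm : P.south t 0 = y := P.mAll (by omega) (by omega) hmax hyalt
      exact ⟨t, by omega, by rw [P.lam_neg hpt, hm]⟩
    · push_neg at hex
      exfalso
      rcases Nat.eq_zero_or_pos y with h0 | h0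
      · subst h0
        apply hne
        rw [exitPipe_zero]
        rcases hyalt with h | h
        · rw [if_neg (by rw [P.cross_false (by omega)]; simp)]
        · rw [if_neg (by rw [h]; simp)]
      · have hc0 : P.cross 0 0 = true := by simpa using hex 0 h0
        apply hne
        rw [exitPipe_zero, if_pos hc0]
        exact (P.mAll h0 (by omega)
          (fun v hv1 hv2 => by simpa using hex v hv2) hyalt).symm

end PipeDream

namespace PipeDream

lemma lam_lt {n : ℕ} (P : PipeDream n) {t : ℕ} (ht : t + 2 ≤ n) : P.lam t < n := by
  cases hct : P.cross t 0 with
  | true => rw [P.lam_pos hct]; omega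
  | false => rw [P.lam_neg hct]; exact P.south_lt (by omega)

variable {m : ℕ}

/-- the pipe dream obtained by deleting the first column. -/
def peel (P : PipeDream (m+1)) : PipeDream m :=
  ⟨fun r c => P.cross r (c+1), fun r c h => by have := P.inShape r (c+1) h; omega⟩

lemma peel_cross (P : PipeDream (m+1)) (r c : ℕ) : P.peel.cross r c = P.cross r (c+1) := rfl

private lemma peelAux (P : PipeDream (m+1)) : ∀ k r c, (m + 1 - r) + c ≤ k →
    (r + c + 2 ≤ m + 1 → P.west r (c+1) = P.lam (P.peel.west r c)) ∧
    (r + c + 3 ≤ m + 1 → P.south r (c+1) = P.lam (P.peel.south r c)) := by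
  intro k
  induction k with
  | zero =>
    intro r c hk
    constructor
    · intro h; omega
    · intro h; omega
  | succ k ih =>
    intro r c hk
    constructor
    · intro h
      match c with
      | 0 =>
        rw [west_succ, west_zero, P.peel.west_zero]
        unfold lam
        rfl
      | c + 1 =>
        rw [west_succ, P.peel.west_succ, peel_cross]
        cases hc : P.cross r (c+1) with
        | true =>
          simp only [if_true]
          exact (ih r c (by omega)).1 (by omega)
        | false =>
          simp only [Bool.false_eq_true, if_false]
          exact (ih r c (by omega)).2 (by omega)
    · intro h
      rw [south_def, P.peel.south_def, peel_cross]
      rw [if_pos (by omega : r + (c+1) + 2 ≤ m + 1), if_pos (by omega : r + c + 2 ≤ m)]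
      cases hc : P.cross (r+1) (c+1) with
      | true =>
        have hs := P.inShape (r+1) (c+1) hc
        simp only [if_true]
        exact (ih (r+1) c (by omega)).2 (by omega)
      | false =>
        simp only [Bool.false_eq_true, if_false]
        exact (ih (r+1) c (by omega)).1 (by omega)

lemma peel_west (P : PipeDream (m+1)) {r c : ℕ} (h : r + c + 2 ≤ m + 1) :
    P.west r (c+1) = P.lam (P.peel.west r c) :=
  (P.peelAux ((m+1-r)+c) r c le_rfl).1 h

lemma peel_south (P : PipeDream (m+1)) {r c : ℕ} (h : r + c + 3 ≤ m + 1) :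
    P.south r (c+1) = P.lam (P.peel.south r c) :=
  (P.peelAux ((m+1-r)+c) r c le_rfl).2 h

lemma peel_reduced {P : PipeDream (m+1)} (h : P.Reduced) : P.peel.Reduced := by
  intro r c r' c' hc hc' hne
  have hs := P.peel.inShape r c hc
  have hs' := P.peel.inShape r' c' hc'
  have e1 := P.peel_west (r := r) (c := c) (by omega)
  have e2 := P.peel_south (r := r) (c := c) (by omega)
  have e3 := P.peel_west (r := r') (c := c') (by omega)
  have e4 := P.peel_south (r := r') (c := c') (by omega)
  intro hcon
  refine h r (c+1) r' (c'+1) hc hc' (by simpa using hne) ?_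
  rcases hcon with ⟨ha, hb⟩ | ⟨ha, hb⟩
  · exact Or.inl ⟨by rw [e1, e3, ha], by rw [e2, e4, hb]⟩
  · exact Or.inr ⟨by rw [e1, e4, ha], by rw [e2, e3, hb]⟩

lemma peel_arc {P : PipeDream (m+1)} {u v : ℕ} (h : P.peel.Arc u v) :
    P.Arc (P.lam u) (P.lam v) := by
  obtain ⟨r, c, hs, hcr, hw, hsv⟩ := h
  exact ⟨r, c+1, by omega, hcr, by rw [P.peel_west (by omega), hw],
    by rw [P.peel_south (by omega), hsv]⟩

lemma peel_C {P : PipeDream (m+1)} {u v : ℕ} (h : Relation.TransGen P.peel.Arc u v) :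
    Relation.TransGen P.Arc (P.lam u) (P.lam v) := by
  induction h with
  | single h => exact Relation.TransGen.single (peel_arc h)
  | tail _ h2 ih => exact ih.tail (peel_arc h2)

lemma peel_crossed {P : PipeDream (m+1)} {u v : ℕ} (h : P.peel.Crossed u v) :
    P.Crossed (P.lam u) (P.lam v) := by
  obtain ⟨r, c, hcr, hor⟩ := h
  have hs := P.peel.inShape r c hcr
  refine ⟨r, c+1, hcr, ?_⟩
  rcases hor with ⟨ha, hb⟩ | ⟨ha, hb⟩
  · exact Or.inl ⟨by rw [P.peel_west (by omega), ha], by rw [P.peel_south (by omega), hb]⟩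
  · exact Or.inr ⟨by rw [P.peel_west (by omega), ha], by rw [P.peel_south (by omega), hb]⟩

lemma arc_cases {P : PipeDream (m+1)} {a b : ℕ} (h : P.Arc a b) :
    (a + 2 ≤ m + 1 ∧ P.cross a 0 = false ∧ b = P.south a 0) ∨
    (∃ u v, P.peel.Arc u v ∧ a = P.lam u ∧ b = P.lam v ∧ u + 2 ≤ m + 1 ∧ v + 2 ≤ m + 1) := by
  obtain ⟨r, c, hs, hcr, hw, hsv⟩ := h
  match c with
  | 0 =>
    left
    rw [west_zero] at hw
    subst hw
    exact ⟨by omega, hcr, hsv.symm⟩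
  | c + 1 =>
    right
    refine ⟨P.peel.west r c, P.peel.south r c, ⟨r, c, by omega, hcr, rfl, rfl⟩,
      by rw [← hw, P.peel_west (by omega)], by rw [← hsv, P.peel_south (by omega)], ?_, ?_⟩
    · have := P.peel.west_lt (r := r) (c := c) (by omega); omega
    · have := P.peel.south_lt (r := r) (c := c) (by omega); omega

lemma crossed_cases {P : PipeDream (m+1)} {a b : ℕ} (h : P.Crossed a b) :
    (∃ s, s + 2 ≤ m + 1 ∧ P.cross s 0 = true ∧
      ((a = s ∧ b = P.south s 0) ∨ (b = s ∧ a = P.south s 0))) ∨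
    (∃ u v, P.peel.Crossed u v ∧ a = P.lam u ∧ b = P.lam v ∧ u + 2 ≤ m + 1 ∧ v + 2 ≤ m + 1) := by
  obtain ⟨r, c, hcr, hor⟩ := h
  have hs := P.inShape r c hcr
  match c with
  | 0 =>
    left
    refine ⟨r, by omega, hcr, ?_⟩
    rcases hor with ⟨ha, hb⟩ | ⟨ha, hb⟩
    · rw [west_zero] at ha; exact Or.inl ⟨ha.symm, hb.symm⟩
    · rw [west_zero] at ha; exact Or.inr ⟨ha.symm, hb.symm⟩
  | c + 1 =>
    right
    have hu2 : P.peel.west r c + 2 ≤ m + 1 := by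
      have := P.peel.west_lt (r := r) (c := c) (by omega); omega
    have hv2 : P.peel.south r c + 2 ≤ m + 1 := by
      have := P.peel.south_lt (r := r) (c := c) (by omega); omega
    have hQc : P.peel.cross r c = true := hcr
    rcases hor with ⟨ha, hb⟩ | ⟨ha, hb⟩
    · exact ⟨P.peel.west r c, P.peel.south r c, ⟨r, c, hQc, Or.inl ⟨rfl, rfl⟩⟩,
        by rw [← ha, P.peel_west (by omega)], by rw [← hb, P.peel_south (by omega)], hu2, hv2⟩
    · exact ⟨P.peel.south r c, P.peel.west r c, ⟨r, c, hQc, Or.inr ⟨rfl, rfl⟩⟩,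
        by rw [← hb, P.peel_south (by omega)], by rw [← ha, P.peel_west (by omega)], hv2, hu2⟩

lemma col_Q_exclusive {P : PipeDream (m+1)} (hred : P.Reduced) {s u v : ℕ}
    (hcs : P.cross s 0 = true) (hQ : P.peel.Crossed u v)
    (hor : (P.lam u = s ∧ P.lam v = P.south s 0) ∨
           (P.lam u = P.south s 0 ∧ P.lam v = s)) : False := by
  obtain ⟨r, c, hc2, heq⟩ := hQ
  have hQs := P.peel.inShape r c hc2
  have hcP : P.cross r (c+1) = true := hc2
  have ew := P.peel_west (r := r) (c := c) (by omega)
  have es := P.peel_south (r := r) (c := c) (by omega)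
  refine hred s 0 r (c+1) hcs hcP (by simp) ?_
  rw [west_zero, ew, es]
  rcases heq with ⟨ha, hb⟩ | ⟨ha, hb⟩ <;> rw [ha, hb] <;> rcases hor with ⟨h1, h2⟩ | ⟨h1, h2⟩
  · exact Or.inl ⟨h1.symm, h2.symm⟩
  · exact Or.inr ⟨h2.symm, h1.symm⟩
  · exact Or.inr ⟨h1.symm, h2.symm⟩
  · exact Or.inl ⟨h2.symm, h1.symm⟩

end PipeDream

namespace PipeDream
variable {m : ℕ}

lemma riser_preimage {P : PipeDream (m+1)} {s w : ℕ} (hs2 : s + 2 ≤ m + 1)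
    (hcs : P.cross s 0 = true) (hw2 : w + 2 ≤ m + 1) (hlw : P.lam w = P.south s 0) :
    P.cross w 0 = false ∧ P.south w 0 = P.south s 0 ∧ w < s := by
  have hcw : P.cross w 0 = false := by
    cases hcwb : P.cross w 0 with
    | false => rfl
    | true =>
      exfalso
      rw [P.lam_pos hcwb] at hlw
      rcases P.m_alt hs2 with h1 | ⟨h1, h2⟩
      · omega
      · rw [← hlw] at h2; rw [h2] at hcwb; exact absurd hcwb (by simp)
  have hsw : P.south w 0 = P.south s 0 := by rw [← P.lam_neg hcw, hlw]
  refine ⟨hcw, hsw, ?_⟩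
  rcases Nat.lt_or_ge w s with h | h
  · exact h
  · exfalso
    have hne : w ≠ s := by
      intro h'; subst h'; rw [hcw] at hcs; exact absurd hcs (by simp)
    have hlt : s < w := by omega
    have := (P.m_interior hs2 hlt (by rw [← hsw]; exact P.m_gt hw2)).1
    rw [this] at hcw; exact absurd hcw (by simp)

lemma exit_not_crossrow {P : PipeDream (m+1)} {s : ℕ} (hs2 : s + 2 ≤ m + 1)
    (hcs : P.cross s 0 = true) : s ≠ P.exitPipe 0 := by
  rw [exitPipe_zero]
  cases hc0 : P.cross 0 0 with
  | false =>
    simp only [Bool.false_eq_true, if_false]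
    intro h; subst h; rw [hc0] at hcs; exact absurd hcs (by simp)
  | true =>
    simp only [if_true]
    intro h
    rcases P.m_alt (show 0 + 2 ≤ m + 1 by have := P.inShape 0 0 hc0; omega) with h1 | ⟨h1, h2⟩
    · omega
    · rw [← h] at h2; rw [h2] at hcs; exact absurd hcs (by simp)

lemma ord_transfer {P : PipeDream (m+1)} (hred : P.Reduced) {tw tz w z : ℕ}
    (hltw : P.lam tw = w) (hltz : P.lam tz = z) (htw2 : tw + 2 ≤ m + 1) (htz2 : tz + 2 ≤ m + 1)
    (hQ : P.peel.Crossed tw tz) (hwz : w ≠ z) : tw < tz ↔ w < z := by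
  have hne : tw ≠ tz := by
    intro h; subst h; rw [hltw] at hltz; exact hwz hltz
  constructor
  · intro h
    rcases Nat.lt_trichotomy w z with h' | h' | h'
    · exact h'
    · exact absurd h' hwz
    · exfalso
      have hflip := P.lam_flip h htz2 htw2 (by rw [hltw, hltz]; omega)
      rw [hltz] at hflip
      exact col_Q_exclusive hred hflip.1 hQ (Or.inr ⟨by rw [hflip.2], hltz⟩)
  · intro h
    rcases Nat.lt_trichotomy tw tz with h' | h' | h'
    · exact h'
    · exact absurd h' hne
    · exfalso
      have hflip := P.lam_flip h' htw2 htz2 (by rw [hltw, hltz]; omega)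
      rw [hltw] at hflip
      exact col_Q_exclusive hred hflip.1 hQ (Or.inl ⟨hltw, by rw [hflip.2]⟩)

theorem m1_core : ∀ n : ℕ, ∀ P : PipeDream n, P.Reduced →
    (∀ x y, x < y → y < n → ¬P.Crossed x y → Relation.TransGen P.Arc x y) ∧
    (∀ a b j, P.Arc a b → min a b < j → j < max a b → P.Crossed a j → P.Crossed b j →
      Relation.TransGen P.Arc a j ∨ Relation.TransGen P.Arc j b) := by
  intro n
  induction n using Nat.strong_induction_on with
  | _ n IH =>
  match n with
  | 0 => exact fun P _ => ⟨fun x y _ hy => by omega,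
      fun a b j harc => by obtain ⟨r, c, hs, _⟩ := harc; omega⟩
  | Nat.succ m =>
  intro P hred
  have hQred := peel_reduced hred
  obtain ⟨M1Q, COREQ⟩ := IH m (by omega) P.peel hQred
  constructor
  · -- ===================== M1 =====================
    intro x y hxy hy hncr
    by_cases hyE : y = P.exitPipe 0
    · exfalso
      rw [exitPipe_zero] at hyE
      cases hc0 : P.cross 0 0 with
      | false => rw [hc0] at hyE; simp at hyE; omega
      | true =>
        rw [hc0] at hyE; simp at hyE
        have h02 : 0 + 2 ≤ m + 1 := by have := P.inShape 0 0 hc0; omega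
        rcases Nat.eq_zero_or_pos x with h0 | h0
        · subst h0
          exact hncr (hyE ▸ P.crossed_col hc0)
        · have hint := P.m_interior h02 h0 (by omega : x < P.south 0 0)
          exact hncr (hyE ▸ hint.2 ▸ P.crossed_col hint.1)
    · by_cases hxE : x = P.exitPipe 0
      · obtain ⟨t, ht2, hlt⟩ := P.lam_surj (show y < m + 1 from hy) hyE
        cases hct : P.cross t 0 with
        | false =>
          rw [P.lam_neg hct] at hlt
          rcases P.RCm ht2 with h | h
          · rw [hlt] at h; exact absurd h hyE
          · rw [hlt] at h; exact hxE ▸ h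
        | true =>
          rw [P.lam_pos hct] at hlt
          subst hlt
          have hpgt := P.m_gt ht2
          have hplt := P.south_lt (r := t) (c := 0) (by omega)
          have hpE : P.south t 0 ≠ P.exitPipe 0 := by
            intro h
            exact hncr (hxE ▸ h ▸ (P.crossed_col hct).symm)
          obtain ⟨t'', ht''2, hlt''⟩ := P.lam_surj (by omega) hpE
          obtain ⟨hel, hsw, hwlt⟩ := riser_preimage ht2 hct ht''2 hlt''
          have hnq : ¬ P.peel.Crossed t'' t := fun hq =>
            col_Q_exclusive hred hct hq (Or.inr ⟨hlt'', P.lam_pos hct⟩)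
          have hcp := peel_C (M1Q t'' t hwlt (by omega) hnq)
          rw [hlt'', P.lam_pos hct] at hcp
          rcases P.RCm ht2 with h | h
          · exact absurd h hpE
          · exact hxE ▸ h.trans hcp
      · obtain ⟨tx, htx2, hltx⟩ := P.lam_surj (by omega) hxE
        obtain ⟨ty, hty2, hlty⟩ := P.lam_surj hy hyE
        rcases Nat.lt_or_ge tx ty with hlt | hge
        · have hnq : ¬ P.peel.Crossed tx ty := fun hq =>
            hncr (hltx ▸ hlty ▸ peel_crossed hq)
          have := peel_C (M1Q tx ty hlt (by omega) hnq)
          rw [hltx, hlty] at this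
          exact this
        · exfalso
          have hne : tx ≠ ty := by
            intro h; subst h; rw [hltx] at hlty; omega
          have hflip := P.lam_flip (show ty < tx by omega) htx2 hty2 (by rw [hltx, hlty]; omega)
          rw [hltx] at hflip
          rw [hlty] at hflip
          exact hncr (hflip.2 ▸ P.crossed_col hflip.1)
  · -- ===================== CORE =====================
    intro a b j harc hj1 hj2 hcaj hcbj
    rcases arc_cases harc with ⟨ha2, hca, hbs⟩ | ⟨u, v, hQarc, hau, hbv, hu2, hv2⟩
    · -- column arc : a elbow row, b = south a 0
      subst hbs
      have hab : a < P.south a 0 := P.m_gt ha2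
      have hblt : P.south a 0 < m + 1 := P.south_lt (r := a) (c := 0) (by omega)
      have haj : a < j := by omega
      have hjb : j < P.south a 0 := by omega
      obtain ⟨hcj, hmj⟩ := P.m_interior ha2 haj hjb
      have hnq : ¬ P.peel.Crossed a j := fun hq =>
        col_Q_exclusive hred hcj hq (Or.inr ⟨by rw [P.lam_neg hca, hmj], P.lam_pos hcj⟩)
      have hcp := peel_C (M1Q a j haj (by omega) hnq)
      rw [P.lam_neg hca, P.lam_pos hcj] at hcp
      exact Or.inl (Relation.TransGen.head harc hcp)
    · -- arc coming from the peeled dream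
      have halt := P.lam_lt hu2
      have hblt := P.lam_lt hv2
      have hjE : j ≠ P.exitPipe 0 := by
        intro hE
        have key : ∀ w, P.Crossed w j →
            ∃ s, s + 2 ≤ m + 1 ∧ P.cross s 0 = true ∧ w = s ∧ j = P.south s 0 := by
          intro w hw
          rcases crossed_cases hw with ⟨s, hs2, hcs, hor⟩ | ⟨u', v', _, hwu, hjv, _, hv'2⟩
          · rcases hor with ⟨h1, h2⟩ | ⟨h1, h2⟩
            · exact ⟨s, hs2, hcs, h1, h2⟩
            · exact absurd (h1 ▸ hE) (exit_not_crossrow hs2 hcs)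
          · exact absurd (hjv ▸ hE) (P.lam_ne_exit hv'2)
        obtain ⟨s1, hs12, hcs1, he1, hj1'⟩ := key a hcaj
        obtain ⟨s2, hs22, hcs2, he2, hj2'⟩ := key b hcbj
        subst he1; subst he2
        have g1 := P.m_gt hs12
        have g2 := P.m_gt hs22
        omega
      have hj2' : j + 2 ≤ m + 1 := by
        have h1 : a < m + 1 := hau ▸ halt
        have h2 : b < m + 1 := hbv ▸ hblt
        omega
      obtain ⟨tj, htj2, hltj⟩ := P.lam_surj (by omega) hjE
      rcases crossed_cases hcaj with ⟨s, hs2, hcs, hor⟩ | ⟨ua, va, hQa, haua, hjva, hua2, hva2⟩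
      · rcases hor with ⟨h1, h2⟩ | ⟨h1, h2⟩
        · -- a = s crossing row, j = south a 0  (a < j)
          subst h1
          obtain ⟨hel, hsw, hwlt⟩ := riser_preimage hs2 hcs htj2 (by rw [hltj, h2])
          have hnq : ¬ P.peel.Crossed tj a := fun hq =>
            col_Q_exclusive hred hcs hq (Or.inr ⟨by rw [hltj, h2], P.lam_pos hcs⟩)
          have hcp := peel_C (M1Q tj a hwlt (by omega) hnq)
          rw [hltj, P.lam_pos hcs] at hcp
          exact Or.inr (hcp.tail harc)
        · -- j = s crossing row, a = south j 0  (j < a)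
          subst h1
          obtain ⟨hcu, hsu, hult⟩ := riser_preimage hs2 hcs hu2 (by rw [← hau, h2])
          have hnq : ¬ P.peel.Crossed u j := fun hq =>
            col_Q_exclusive hred hcs hq (Or.inr ⟨by rw [← hau, h2], P.lam_pos hcs⟩)
          have hcp := peel_C (M1Q u j hult (by omega) hnq)
          rw [← hau, P.lam_pos hcs] at hcp
          exact Or.inl hcp
      · rcases crossed_cases hcbj with ⟨s, hs2, hcs, hor⟩ | ⟨ub, vb, hQb, hbub, hjvb, hub2, hvb2⟩
        · rcases hor with ⟨h1, h2⟩ | ⟨h1, h2⟩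
          · -- b = s crossing row, j = south b 0  (b < j)
            subst h1
            obtain ⟨hel, hsw, hwlt⟩ := riser_preimage hs2 hcs htj2 (by rw [hltj, h2])
            have hnq : ¬ P.peel.Crossed tj b := fun hq =>
              col_Q_exclusive hred hcs hq (Or.inr ⟨by rw [hltj, h2], P.lam_pos hcs⟩)
            have hcp := peel_C (M1Q tj b hwlt (by omega) hnq)
            rw [hltj, P.lam_pos hcs] at hcp
            exact Or.inr hcp
          · -- j = s crossing row, b = south j 0  (j < b)
            subst h1
            obtain ⟨hcv, hsv, hvlt⟩ := riser_preimage hs2 hcs hv2 (by rw [← hbv, h2])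
            have hnq : ¬ P.peel.Crossed v j := fun hq =>
              col_Q_exclusive hred hcs hq (Or.inr ⟨by rw [← hbv, h2], P.lam_pos hcs⟩)
            have hcp := peel_C (M1Q v j hvlt (by omega) hnq)
            rw [← hbv, P.lam_pos hcs] at hcp
            exact Or.inl (Relation.TransGen.head harc hcp)
        · -- both crossings in the peeled dream
          have hua : ua = u := P.lam_inj hua2 hu2 (by rw [← haua, hau])
          rw [hua] at hQa
          have hvb : vb = va := P.lam_inj hvb2 hva2 (by rw [← hjvb, hjva])
          rw [hvb] at hQb
          have hub : ub = v := P.lam_inj hub2 hv2 (by rw [← hbub, hbv])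
          rw [hub] at hQb
          have hordA := ord_transfer hred hau.symm hjva.symm hu2 hva2 hQa (by omega)
          have hordB := ord_transfer hred hbv.symm hjva.symm hv2 hva2 hQb (by omega)
          have hneA : u ≠ va := by
            intro h; subst h; rw [← hau] at hjva; rw [← hjva] at hj1 hj2; omega
          have hneB : v ≠ va := by
            intro h; subst h; rw [← hbv] at hjva; rw [← hjva] at hj1 hj2; omega
          have hbetween : min u v < va ∧ va < max u v := by
            rcases Nat.lt_trichotomy a j with h | h | h
            · have h1 : u < va := hordA.mpr h
              have h2 : j < b := by omega
              have h3 : va < v := by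
                rcases Nat.lt_trichotomy va v with h' | h' | h'
                · exact h'
                · exact absurd h'.symm hneB
                · exact absurd (hordB.mp h') (by omega)
              omega
            · omega
            · have h1 : va < u := by
                rcases Nat.lt_trichotomy va u with h' | h' | h'
                · exact h'
                · exact absurd h'.symm hneA
                · exact absurd (hordA.mp h') (by omega)
              have h2 : b < j := by omega
              have h3 : v < va := hordB.mpr h2
              omega
          rcases COREQ u v va hQarc hbetween.1 hbetween.2 hQa hQb with h | h
          · left
            have := peel_C h
            rw [← hau, ← hjva] at this
            exact this
          · right
            have := peel_C h
            rw [← hbv, ← hjva] at this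
            exact this

end PipeDream

namespace PipeDream
variable {n : ℕ}

lemma arc_bound {P : PipeDream n} {a b : ℕ} (h : P.Arc a b) : a < n ∧ b < n := by
  obtain ⟨r, c, hs, _, hw, hsv⟩ := h
  exact ⟨hw ▸ P.west_lt (by omega), hsv ▸ P.south_lt (by omega)⟩

lemma LA {P : PipeDream n} (hred : P.Reduced) {a b j : ℕ} (harc : P.Arc a b)
    (hj1 : min a b < j) (hj2 : j < max a b) :
    Relation.TransGen P.Arc a j ∨ Relation.TransGen P.Arc j b := by
  obtain ⟨ha, hb⟩ := arc_bound harc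
  have M1 := (m1_core n P hred).1
  by_cases hca : P.Crossed a j
  · by_cases hcb : P.Crossed b j
    · exact (m1_core n P hred).2 a b j harc hj1 hj2 hca hcb
    · rcases Nat.lt_trichotomy j b with h | h | h
      · exact Or.inr (M1 j b h hb (fun hc => hcb hc.symm))
      · omega
      · exact Or.inl (Relation.TransGen.head harc (M1 b j h (by omega) hcb))
  · rcases Nat.lt_trichotomy a j with h | h | h
    · exact Or.inl (M1 a j h (by omega) hca)
    · omega
    · exact Or.inr ((M1 j a h ha (fun hc => hca hc.symm)).tail harc)

/-- condition (*) -/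
lemma star {P : PipeDream n} (hred : P.Reduced) {i k : ℕ}
    (h : Relation.TransGen P.Arc i k) : ∀ j, i < j → j < k →
    Relation.TransGen P.Arc i j ∨ Relation.TransGen P.Arc j k := by
  induction h with
  | single harc =>
    intro j h1 h2
    exact LA hred harc (j := j) (by omega) (by omega)
  | tail hib harc ih =>
    intro j h1 h2
    rename_i b _
    rcases Nat.lt_trichotomy j b with h | h | h
    · rcases ih j h1 h with hl | hr
      · exact Or.inl hl
      · exact Or.inr (hr.tail harc)
    · exact Or.inl (h ▸ hib)
    · rcases LA hred harc (j := j) (by omega) (by omega) with hl | hr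
      · exact Or.inl (hib.trans hl)
      · exact Or.inr hr

/-- condition (**) -/
lemma starstar {P : PipeDream n} (hred : P.Reduced) {k i : ℕ}
    (h : Relation.TransGen P.Arc k i) : ∀ j, i < j → j < k →
    Relation.TransGen P.Arc k j ∨ Relation.TransGen P.Arc j i := by
  induction h with
  | single harc =>
    intro j h1 h2
    rcases LA hred harc (j := j) (by omega) (by omega) with hl | hr
    · exact Or.inl hl
    · exact Or.inr hr
  | tail hkb harc ih =>
    intro j h1 h2
    rename_i b _
    rcases Nat.lt_trichotomy j b with h | h | h
    · rcases LA hred harc (j := j) (by omega) (by omega) with hl | hr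
      · exact Or.inl (hkb.trans hl)
      · exact Or.inr hr
    · exact Or.inl (h ▸ hkb)
    · rcases ih j h h2 with hl | hr
      · exact Or.inl hl
      · exact Or.inr (hr.tail harc)

end PipeDream

/-- generic: a strict total order on `Fin n` is realized by the positions of a permutation. -/
lemma exists_perm_of_sto {n : ℕ} (r : Fin n → Fin n → Prop)
    (hirr : ∀ i, ¬ r i i)
    (htot : ∀ i j, i ≠ j → r i j ∨ r j i)
    (htrans : ∀ i j k, r i j → r j k → r i k) :
    ∃ σ : Equiv.Perm (Fin n), ∀ i j, (σ⁻¹ i < σ⁻¹ j ↔ r i j) := by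
  classical
  have hasym : ∀ i j, r i j → r j i → False := fun i j h1 h2 => hirr i (htrans i j i h1 h2)
  set S : Fin n → Finset (Fin n) := fun x => Finset.univ.filter (fun y => r y x) with hS
  have hsub : ∀ {x y}, r x y → S x ⊂ S y := by
    intro x y hxy
    have hss : S x ⊆ S y := by
      intro z hz
      simp only [hS, Finset.mem_filter, Finset.mem_univ, true_and] at hz ⊢
      exact htrans z x y hz hxy
    refine (Finset.ssubset_iff_of_subset hss).mpr ⟨x, ?_, ?_⟩
    · simp [hS, hxy]
    · simp [hS, hirr x]
  have hcard : ∀ x : Fin n, (S x).card < n := by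
    intro x
    rcases Nat.lt_or_ge (S x).card n with h | h
    · exact h
    · exfalso
      have : (S x).card = n := le_antisymm (by simpa using Finset.card_le_univ (S x)) h
      have heq : S x = Finset.univ := Finset.eq_univ_of_card _ (by simpa using this)
      have : x ∈ S x := heq ▸ Finset.mem_univ x
      simp [hS, hirr x] at this
  set f : Fin n → Fin n := fun x => ⟨(S x).card, hcard x⟩ with hf
  have hmono : ∀ {x y}, r x y → f x < f y := by
    intro x y hxy
    simpa [hf, Fin.lt_def] using Finset.card_lt_card (hsub hxy)
  have hinj : Function.Injective f := by
    intro x y hxy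
    by_contra hne
    rcases htot x y hne with h | h
    · exact absurd (hmono h) (by rw [hxy]; exact lt_irrefl _)
    · exact absurd (hmono h) (by rw [hxy]; exact lt_irrefl _)
  have hbij := Finite.injective_iff_bijective.mp hinj
  refine ⟨(Equiv.ofBijective f hbij).symm, ?_⟩
  intro i j
  have hinv : ∀ x, ((Equiv.ofBijective f hbij).symm)⁻¹ x = f x := fun x => rfl
  rw [hinv, hinv]
  constructor
  · intro h
    rcases Nat.lt_trichotomy i.1 j.1 with _ | heq | _
    all_goals {
      by_contra hr
      rcases eq_or_ne i j with he | hne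
      · subst he; exact lt_irrefl _ h
      · rcases htot i j hne with h' | h'
        · exact hr h'
        · exact absurd (hmono h') (by omega)
    }
  · exact hmono

lemma PipeDream.linext_C {n : ℕ} {P : PipeDream n} {π : Equiv.Perm (Fin n)}
    (hlin : P.LinExt π) {x y : Fin n}
    (h : Relation.TransGen P.Arc x.1 y.1) : π⁻¹ x < π⁻¹ y := by
  have key : ∀ y', Relation.TransGen P.Arc x.1 y' → ∀ (hy : y' < n), π⁻¹ x < π⁻¹ ⟨y', hy⟩ := by
    intro y' h
    induction h with
    | single harc =>
      intro hy
      exact hlin x ⟨_, hy⟩ harc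
    | @tail b c hxb harc ih =>
      intro hy
      have hb := (PipeDream.arc_bound harc).1
      exact lt_trans (ih hb) (hlin ⟨_, hb⟩ ⟨_, hy⟩ harc)
  have := key y.1 h y.isLt
  simpa using this

/-- For any permutation `ω ∈ S_n` and any acyclic reduced pipe
dream `P ∈ Π(ω)`, the set `L(P)` of linear extensions of `P` is a nonempty interval
of the weak order on `S_n` : there exist permutations `σ ≤ τ` such that
`L(P) = {π : σ ≤ π ≤ τ}`. -/
theorem linExt_isInterval (n : ℕ) (ω : Equiv.Perm (Fin n)) (P : PipeDream n)
    (hred : P.Reduced) (hexit : P.HasExitPerm ω) (hacyclic : P.Acyclic) :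
    ∃ σ τ : Equiv.Perm (Fin n), WeakLE σ τ ∧
      ∀ π : Equiv.Perm (Fin n), P.LinExt π ↔ (WeakLE σ π ∧ WeakLE π τ) := by
  classical
  set C : ℕ → ℕ → Prop := Relation.TransGen P.Arc with hC
  have hirr : ∀ x, ¬ C x x := hacyclic
  have hnotboth : ∀ {x y}, C x y → C y x → False := fun h1 h2 => hirr _ (h1.trans h2)
  set r1 : Fin n → Fin n → Prop := fun i j => C i.1 j.1 ∨ (i.1 < j.1 ∧ ¬ C j.1 i.1) with hr1
  set r2 : Fin n → Fin n → Prop := fun i j => C i.1 j.1 ∨ (j.1 < i.1 ∧ ¬ C j.1 i.1) with hr2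
  have h1irr : ∀ i, ¬ r1 i i := by
    intro i h
    rcases h with h | h
    · exact hirr _ h
    · omega
  have h2irr : ∀ i, ¬ r2 i i := by
    intro i h
    rcases h with h | h
    · exact hirr _ h
    · omega
  have h1tot : ∀ i j, i ≠ j → r1 i j ∨ r1 j i := by
    intro i j hne
    have hv : i.1 ≠ j.1 := fun h => hne (Fin.ext h)
    rcases Nat.lt_or_ge i.1 j.1 with h | h
    · by_cases hc : C j.1 i.1
      · exact Or.inr (Or.inl hc)
      · exact Or.inl (Or.inr ⟨h, hc⟩)
    · by_cases hc : C i.1 j.1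
      · exact Or.inl (Or.inl hc)
      · exact Or.inr (Or.inr ⟨by omega, hc⟩)
  have h2tot : ∀ i j, i ≠ j → r2 i j ∨ r2 j i := by
    intro i j hne
    have hv : i.1 ≠ j.1 := fun h => hne (Fin.ext h)
    rcases Nat.lt_or_ge i.1 j.1 with h | h
    · by_cases hc : C i.1 j.1
      · exact Or.inl (Or.inl hc)
      · exact Or.inr (Or.inr ⟨h, hc⟩)
    · by_cases hc : C j.1 i.1
      · exact Or.inr (Or.inl hc)
      · exact Or.inl (Or.inr ⟨by omega, hc⟩)
  have h1trans : ∀ i j k, r1 i j → r1 j k → r1 i k := by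
    intro i j k hij hjk
    rcases hij with hc1 | ⟨hl1, hn1⟩ <;> rcases hjk with hc2 | ⟨hl2, hn2⟩
    · exact Or.inl (hc1.trans hc2)
    · by_cases hik : C i.1 k.1
      · exact Or.inl hik
      refine Or.inr ⟨?_, ?_⟩
      · by_contra h
        rcases Nat.eq_or_lt_of_le (show k.1 ≤ i.1 by omega) with he | hlt
        · exact hn2 (by rw [he]; exact hc1)
        · rcases PipeDream.starstar hred hc1 k.1 hl2 hlt with h' | h'
          · exact hik h'
          · exact hn2 h'
      · intro hki
        exact hn2 (hki.trans hc1)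
    · by_cases hik : C i.1 k.1
      · exact Or.inl hik
      refine Or.inr ⟨?_, ?_⟩
      · by_contra h
        rcases Nat.eq_or_lt_of_le (show k.1 ≤ i.1 by omega) with he | hlt
        · exact hn1 (by rw [← he]; exact hc2)
        · rcases PipeDream.starstar hred hc2 i.1 hlt hl1 with h' | h'
          · exact hn1 h'
          · exact hik h'
      · intro hki
        exact hn1 (hc2.trans hki)
    · refine Or.inr ⟨by omega, ?_⟩
      intro hki
      rcases PipeDream.starstar hred hki j.1 hl1 hl2 with h' | h'
      · exact hn2 h'
      · exact hn1 h'
  have h2trans : ∀ i j k, r2 i j → r2 j k → r2 i k := by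
    intro i j k hij hjk
    rcases hij with hc1 | ⟨hl1, hn1⟩ <;> rcases hjk with hc2 | ⟨hl2, hn2⟩
    · exact Or.inl (hc1.trans hc2)
    · by_cases hik : C i.1 k.1
      · exact Or.inl hik
      refine Or.inr ⟨?_, ?_⟩
      · by_contra h
        rcases Nat.eq_or_lt_of_le (show i.1 ≤ k.1 by omega) with he | hlt
        · exact hn2 (by rw [← he]; exact hc1)
        · rcases PipeDream.star hred hc1 k.1 hlt hl2 with h' | h'
          · exact hik h'
          · exact hn2 h'
      · intro hki
        exact hn2 (hki.trans hc1)
    · by_cases hik : C i.1 k.1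
      · exact Or.inl hik
      refine Or.inr ⟨?_, ?_⟩
      · by_contra h
        rcases Nat.eq_or_lt_of_le (show i.1 ≤ k.1 by omega) with he | hlt
        · exact hn1 (by rw [he]; exact hc2)
        · rcases PipeDream.star hred hc2 i.1 hl1 hlt with h' | h'
          · exact hn1 h'
          · exact hik h'
      · intro hki
        exact hn1 (hc2.trans hki)
    · refine Or.inr ⟨by omega, ?_⟩
      intro hki
      rcases PipeDream.star hred hki j.1 hl2 hl1 with h' | h'
      · exact hn2 h'
      · exact hn1 h'
  obtain ⟨σ, hσ⟩ := exists_perm_of_sto r1 h1irr h1tot h1trans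
  obtain ⟨τ, hτ⟩ := exists_perm_of_sto r2 h2irr h2tot h2trans
  refine ⟨σ, τ, ?_, ?_⟩
  · intro i j hij hlt
    have hji : C j.1 i.1 := by
      rcases (hσ j i).mp hlt with h | h
      · exact h
      · exact absurd (Fin.lt_def.mp hij) (by omega)
    exact (hτ j i).mpr (Or.inl hji)
  · intro π
    constructor
    · intro hlin
      refine ⟨?_, ?_⟩
      · intro i j hij hlt
        have hji : C j.1 i.1 := by
          rcases (hσ j i).mp hlt with h | h
          · exact h
          · exact absurd (Fin.lt_def.mp hij) (by omega)
        exact PipeDream.linext_C hlin hji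
      · intro i j hij hlt
        apply (hτ j i).mpr
        by_cases hc : C i.1 j.1
        · exact absurd (PipeDream.linext_C hlin hc) (lt_asymm hlt)
        · exact Or.inr ⟨Fin.lt_def.mp hij, hc⟩
    · rintro ⟨h1, h2⟩ i j harc
      have hCij : C i.1 j.1 := Relation.TransGen.single harc
      have hne : i ≠ j := fun h => hirr j.1 (h ▸ hCij)
      rcases lt_trichotomy i j with hij | hij | hij
      · by_contra hcon
        have hlt : π⁻¹ j < π⁻¹ i := by
          rcases lt_trichotomy (π⁻¹ i) (π⁻¹ j) with h | h | h
          · exact absurd h hcon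
          · exact absurd (π⁻¹.injective h) hne
          · exact h
        rcases (hτ j i).mp (h2 i j hij hlt) with h | h
        · exact hnotboth hCij h
        · exact h.2 hCij
      · exact absurd hij hne
      · exact h1 j i hij ((hσ i j).mpr (Or.inl hCij))
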